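/- In any transition system that is sort-finite and satisfies bounded nondeterminacy (axiom BN), the finitary preorder coincides with the ω-approximant of bisimulation: ≲^F = ≲_ω. -/

import Mathlib

universe u

/-- A labelled transition system with a divergence predicate. -/
structure LTS (Proc : Type u) (Act : Type u) where
  trans : Proc → Act → Proc → Prop
  div : Proc → Prop

namespace LTS

variable {Proc Act : Type u}

def conv (T : LTS Proc Act) (p : Proc) : Prop := ¬ T.div p

def Prebisim (T : LTS Proc Act) (R : Proc → Proc → Prop) : Prop :=
  ∀ p q, R p q →
    (∀ a p', T.trans p a p' → ∃ q', T.trans q a q' ∧ R p' q') ∧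
    (T.conv p → T.conv q ∧
      ∀ a q', T.trans q a q' → ∃ p', T.trans p a p' ∧ R p' q')

def Bisim (T : LTS Proc Act) (p q : Proc) : Prop :=
  ∃ R, T.Prebisim R ∧ R p q

def Fop (T : LTS Proc Act) (R : Proc → Proc → Prop) : Proc → Proc → Prop :=
  fun p q =>
    (∀ a p', T.trans p a p' → ∃ q', T.trans q a q' ∧ R p' q') ∧
    (T.conv p → T.conv q ∧
      ∀ a q', T.trans q a q' → ∃ p', T.trans p a p' ∧ R p' q')

def approxN (T : LTS Proc Act) : ℕ → Proc → Proc → Prop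
  | 0 => fun _ _ => True
  | n + 1 => T.Fop (T.approxN n)

/-- The ω-approximant `≲_ω` of bisimulation. -/
def approxOmega (T : LTS Proc Act) (p q : Proc) : Prop := ∀ n, T.approxN n p q

/-- `sort(p)`. -/
def sortP (T : LTS Proc Act) (p : Proc) : Set Act :=
  {a | ∃ q r, Relation.ReflTransGen (fun x y => ∃ b, T.trans x b y) p q ∧ T.trans q a r}

/-- The capability set `C(p) ⊆ (Act × Proc) ∪ {⊥}` of a process. -/
def capSet (T : LTS Proc Act) (p : Proc) : Set (Option (Act × Proc)) :=
  {c | (c = none ∧ T.div p) ∨ ∃ a q, c = some (a, q) ∧ T.trans p a q}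

end LTS

/-- The two-sorted finitary domain logic `L_ω` for transition systems:
`false` is the process sort `π`, `true` the capability sort `κ`. -/
inductive LFF (Act : Type u) : Bool → Type u
  | tt {b} : LFF Act b
  | ff {b} : LFF Act b
  | and {b} (φ ψ : LFF Act b) : LFF Act b
  | or {b} (φ ψ : LFF Act b) : LFF Act b
  | box (φ : LFF Act true) : LFF Act false
  | dia (φ : LFF Act true) : LFF Act false
  | act (a : Act) (φ : LFF Act false) : LFF Act true

/-- Semantic domain of each sort: processes for `π`, capabilities for `κ`. -/
def LSort (Proc Act : Type u) : Bool → Type u := fun b =>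
  match b with
  | false => Proc
  | true => Option (Act × Proc)

/-- Satisfaction for the two-sorted finitary domain logic. -/
def LFF.sat {Proc Act : Type u} (T : LTS Proc Act) :
    {b : Bool} → LFF Act b → LSort Proc Act b → Prop
  | _, .tt, _ => True
  | _, .ff, _ => False
  | _, .and φ ψ, x => sat T φ x ∧ sat T ψ x
  | _, .or φ ψ, x => sat T φ x ∨ sat T ψ x
  | _, .box φ, p => ∀ c ∈ T.capSet p, sat T φ c
  | _, .dia φ, p => sat T φ none ∨ ∃ c ∈ T.capSet p, sat T φ c
  | _, .act a φ, c => ∃ q, c = some (a, q) ∧ sat T φ q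

/-- The axiom scheme of bounded non-determinacy (BN):
`□⋁_{i∈I} φ_i ≤ ⋁_{J fin ⊆ I} □⋁_{j∈J} φ_j` for finitary formulas `φ_i`. -/
def BN {Proc Act : Type u} (T : LTS Proc Act) : Prop :=
  ∀ (p : Proc) (ι : Type u) (φ : ι → LFF Act true),
    (∀ c ∈ T.capSet p, ∃ i, LFF.sat T (φ i) c) →
    ∃ J : Finset ι, ∀ c ∈ T.capSet p, ∃ i ∈ J, LFF.sat T (φ i) c

/-- Finite synchronisation trees. -/
inductive FST (Act : Type u) : Type u
  | node (children : List (Act × FST Act)) (d : Bool) : FST Act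

/-- The disjoint union of the finite-synchronisation-tree transition system
with a given transition system `T`. -/
def combF {Proc Act : Type u} (T : LTS Proc Act) : LTS (FST Act ⊕ Proc) Act where
  trans := fun x a y =>
    match x, y with
    | .inl (.node cs _), .inl t => (a, t) ∈ cs
    | .inr p, .inr q => T.trans p a q
    | _, _ => False
  div := fun x =>
    match x with
    | .inl (.node _ d) => d = true
    | .inr p => T.div p

/-- The finitary preorder `≲^F`: `p ≲^F q` iff every finite synchronisation tree
below `p` (in the bisimulation preorder) is below `q`. -/
def FinPre {Proc Act : Type u} (T : LTS Proc Act) (p q : Proc) : Prop :=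
  ∀ t : FST Act,
    (combF T).Bisim (.inl t) (.inr p) → (combF T).Bisim (.inl t) (.inr q)

/-! Let `≡ₙ` be the kernel of `≲ₙ`. With finite sort, the states reachable from `r` fall into
finitely many `≡ₙ`-classes: a state's `≲ₙ₊₁`-class is determined by its divergence together with
the pairs (action, `≡ₙ`-class of a successor). Choosing one successor from each such pair gives a
finite tree `uₙ(r)` with `r ≲ₙ uₙ(r)` and `uₙ(r) ≲ x` whenever `r ≲ₙ x`; applied to `p ≲^F q`
this yields `p ≲ₙ q`. Conversely, a finite tree of height `n` below a process in `≲ₙ` is below it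
in `≲`, so `≲_ω ⊆ ≲^F`. -/

open Filter

namespace LTS

variable {Proc Act : Type u} {T : LTS Proc Act}

theorem Fop.mono {R S : Proc → Proc → Prop} (hRS : ∀ p q, R p q → S p q) {p q : Proc}
    (h : T.Fop R p q) : T.Fop S p q := by
  obtain ⟨hfwd, hbwd⟩ := h
  refine ⟨fun a p' hp' => ?_, fun hp => ?_⟩
  · obtain ⟨q', hq', hR⟩ := hfwd a p' hp'
    exact ⟨q', hq', hRS _ _ hR⟩
  · obtain ⟨hq, hback⟩ := hbwd hp
    refine ⟨hq, fun a q' hq' => ?_⟩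
    obtain ⟨p', hp', hR⟩ := hback a q' hq'
    exact ⟨p', hp', hRS _ _ hR⟩

theorem Fop.refl {R : Proc → Proc → Prop} (hR : ∀ p, R p p) (p : Proc) : T.Fop R p p :=
  ⟨fun _ p' hp' => ⟨p', hp', hR p'⟩, fun hp => ⟨hp, fun _ q' hq' => ⟨q', hq', hR q'⟩⟩⟩

theorem Fop.trans {R S : Proc → Proc → Prop} {p q r : Proc} (h₁ : T.Fop R p q)
    (h₂ : T.Fop S q r) : T.Fop (Relation.Comp R S) p r := by
  obtain ⟨hfwd₁, hbwd₁⟩ := h₁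
  obtain ⟨hfwd₂, hbwd₂⟩ := h₂
  refine ⟨fun a p' hp' => ?_, fun hp => ?_⟩
  · obtain ⟨q', hq', hpq⟩ := hfwd₁ a p' hp'
    obtain ⟨r', hr', hqr⟩ := hfwd₂ a q' hq'
    exact ⟨r', hr', q', hpq, hqr⟩
  · obtain ⟨hq, hback₁⟩ := hbwd₁ hp
    obtain ⟨hr, hback₂⟩ := hbwd₂ hq
    refine ⟨hr, fun a r' hr' => ?_⟩
    obtain ⟨q', hq', hqr⟩ := hback₂ a r' hr'
    obtain ⟨p', hp', hpq⟩ := hback₁ a q' hq'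
    exact ⟨p', hp', q', hpq, hqr⟩

variable (T) in
theorem approxN_refl (n : ℕ) (p : Proc) : T.approxN n p p := by
  induction n generalizing p with
  | zero => trivial
  | succ n ih => exact Fop.refl ih p

theorem approxN_trans {n : ℕ} {p q r : Proc} (hpq : T.approxN n p q) (hqr : T.approxN n q r) :
    T.approxN n p r := by
  induction n generalizing p q r with
  | zero => trivial
  | succ n ih => exact (Fop.trans hpq hqr).mono fun _ _ ⟨_, h₁, h₂⟩ => ih h₁ h₂

theorem bisim_fop {p q : Proc} (h : T.Bisim p q) : T.Fop T.Bisim p q := by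
  obtain ⟨R, hR, hpq⟩ := h
  exact Fop.mono (fun x y hxy => ⟨R, hR, hxy⟩) (hR p q hpq)

theorem bisim_of_fop_or_bisim {R : Proc → Proc → Prop}
    (hR : ∀ p q, R p q → T.Fop (fun x y => R x y ∨ T.Bisim x y) p q) {p q : Proc}
    (h : R p q) : T.Bisim p q := by
  refine ⟨fun x y => R x y ∨ T.Bisim x y, ?_, Or.inl h⟩
  rintro x y (hxy | hxy)
  · exact hR x y hxy
  · exact (bisim_fop hxy).mono fun _ _ => Or.inr

theorem approxN_of_bisim {p q : Proc} (h : T.Bisim p q) (n : ℕ) : T.approxN n p q := by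
  induction n generalizing p q with
  | zero => trivial
  | succ n ih => exact (bisim_fop h).mono fun _ _ => ih

theorem approxN_map_iff {Proc' : Type u} {T' : LTS Proc' Act} {f : Proc → Proc'}
    (htrans : ∀ p a y, T'.trans (f p) a y ↔ ∃ p', y = f p' ∧ T.trans p a p')
    (hdiv : ∀ p, T'.div (f p) ↔ T.div p) (n : ℕ) (p q : Proc) :
    T'.approxN n (f p) (f q) ↔ T.approxN n p q := by
  induction n generalizing p q with
  | zero => exact Iff.rfl
  | succ n ih =>
    have hconv : ∀ p, T'.conv (f p) ↔ T.conv p := fun p => not_congr (hdiv p)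
    constructor
    · rintro ⟨hfwd, hbwd⟩
      refine ⟨fun a p' hp' => ?_, fun hp => ?_⟩
      · obtain ⟨y, hy, hpy⟩ := hfwd a (f p') ((htrans p a _).mpr ⟨p', rfl, hp'⟩)
        obtain ⟨q', rfl, hq'⟩ := (htrans q a y).mp hy
        exact ⟨q', hq', (ih p' q').mp hpy⟩
      · obtain ⟨hq, hback⟩ := hbwd ((hconv p).mpr hp)
        refine ⟨(hconv q).mp hq, fun a q' hq' => ?_⟩
        obtain ⟨y, hy, hyq⟩ := hback a (f q') ((htrans q a _).mpr ⟨q', rfl, hq'⟩)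
        obtain ⟨p', rfl, hp'⟩ := (htrans p a y).mp hy
        exact ⟨p', hp', (ih p' q').mp hyq⟩
    · rintro ⟨hfwd, hbwd⟩
      refine ⟨fun a y hy => ?_, fun hp => ?_⟩
      · obtain ⟨p', rfl, hp'⟩ := (htrans p a y).mp hy
        obtain ⟨q', hq', hpq⟩ := hfwd a p' hp'
        exact ⟨f q', (htrans q a _).mpr ⟨q', rfl, hq'⟩, (ih p' q').mpr hpq⟩
      · obtain ⟨hq, hback⟩ := hbwd ((hconv p).mp hp)
        refine ⟨(hconv q).mpr hq, fun a y hy => ?_⟩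
        obtain ⟨q', rfl, hq'⟩ := (htrans q a y).mp hy
        obtain ⟨p', hp', hpq⟩ := hback a q' hq'
        exact ⟨f p', (htrans p a _).mpr ⟨p', rfl, hp'⟩, (ih p' q').mpr hpq⟩

theorem exists_finite_signature {R : Set Proc} {A : Set Act} (hA : A.Finite)
    (hR : ∀ x ∈ R, ∀ a x', T.trans x a x' → a ∈ A ∧ x' ∈ R) (n : ℕ) :
    ∃ (β : Type u) (f : Proc → β), (f '' R).Finite ∧ ∀ x y, f x = f y → T.approxN n x y := by
  induction n with
  | zero => exact ⟨PUnit, fun _ => PUnit.unit, Set.toFinite _, fun _ _ _ => trivial⟩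
  | succ n ih =>
    obtain ⟨β, f, hfin, hf⟩ := ih
    let g : Proc → Prop × Set (Act × β) := fun x =>
      (T.div x, {k | ∃ x', T.trans x k.1 x' ∧ f x' = k.2})
    refine ⟨_, g, ?_, fun x y hxy => ⟨fun a x' hx' => ?_, fun hx => ?_⟩⟩
    · refine (Set.finite_univ.prod (hA.prod hfin).finite_subsets).subset ?_
      rintro _ ⟨x, hx, rfl⟩
      refine ⟨Set.mem_univ _, ?_⟩
      rintro ⟨a, _⟩ ⟨x', hx', rfl⟩
      obtain ⟨ha, hx'R⟩ := hR x hx a x' hx'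
      exact ⟨ha, x', hx'R, rfl⟩
    · have : (a, f x') ∈ (g y).2 := hxy ▸ ⟨x', hx', rfl⟩
      obtain ⟨y', hy', hfy'⟩ := this
      exact ⟨y', hy', hf x' y' hfy'.symm⟩
    · refine ⟨fun hy => hx (by rwa [show T.div x = T.div y from congrArg Prod.fst hxy]), ?_⟩
      intro a y' hy'
      have : (a, f y') ∈ (g x).2 := hxy ▸ ⟨y', hy', rfl⟩
      obtain ⟨x', hx', hfx'⟩ := this
      exact ⟨x', hx', hf x' y' hfx'⟩

theorem exists_finite_successor_cover {r : Proc} (hsort : (T.sortP r).Finite) (n : ℕ) :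
    ∃ S : Finset (Act × Proc), (∀ k ∈ S, T.trans r k.1 k.2) ∧
      ∀ a x', T.trans r a x' → ∃ y, (a, y) ∈ S ∧ T.approxN n x' y ∧ T.approxN n y x' := by
  let reach : Set Proc := {x | Relation.ReflTransGen (fun x y => ∃ b, T.trans x b y) r x}
  have hreach : ∀ x ∈ reach, ∀ a x', T.trans x a x' → a ∈ T.sortP r ∧ x' ∈ reach :=
    fun x hx a x' hx' => ⟨⟨x, x', hx, hx'⟩, Relation.ReflTransGen.tail hx ⟨a, hx'⟩⟩
  obtain ⟨β, f, hfin, hf⟩ := exists_finite_signature hsort hreach n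
  let succ : Set (Act × Proc) := {k | T.trans r k.1 k.2}
  let sig : Act × Proc → Act × β := fun k => (k.1, f k.2)
  have hsig : (sig '' succ).Finite := by
    refine (hsort.prod hfin).subset ?_
    rintro _ ⟨⟨a, x'⟩, hx', rfl⟩
    exact (hreach r Relation.ReflTransGen.refl a x' hx').imp id fun h => ⟨x', h, rfl⟩
  obtain ⟨S, hSsucc, hS⟩ := Set.exists_subset_bijOn succ sig
  have hSfin : S.Finite := Set.Finite.of_finite_image (hS.image_eq ▸ hsig) hS.injOn
  refine ⟨hSfin.toFinset, fun k hk => hSsucc (hSfin.mem_toFinset.mp hk), fun a x' hx' => ?_⟩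
  obtain ⟨⟨b, y⟩, hy, hsig⟩ := hS.surjOn ⟨(a, x'), hx', rfl⟩
  obtain ⟨rfl, hfy⟩ := Prod.mk.inj hsig
  exact ⟨y, hSfin.mem_toFinset.mpr hy, hf x' y hfy.symm, hf y x' hfy⟩

end LTS

section combF

variable {Proc Act : Type u} {T : LTS Proc Act}

theorem combF_trans_inr {p : Proc} {a : Act} {y : FST Act ⊕ Proc} :
    (combF T).trans (.inr p) a y ↔ ∃ q, y = .inr q ∧ T.trans p a q := by
  cases y <;> simp [combF]

theorem combF_trans_node {cs : List (Act × FST Act)} {d : Bool} {a : Act} {y : FST Act ⊕ Proc} :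
    (combF T).trans (.inl (.node cs d)) a y ↔ ∃ t, y = .inl t ∧ (a, t) ∈ cs := by
  rcases y with ⟨_, _⟩ | _ <;> simp [combF]

theorem combF_approxN_inr_iff (n : ℕ) (p q : Proc) :
    (combF T).approxN n (.inr p) (.inr q) ↔ T.approxN n p q :=
  LTS.approxN_map_iff (fun _ _ _ => combF_trans_inr) (fun _ => Iff.rfl) n p q

variable (T) in
theorem eventually_bisim_of_approxN_tree (t : FST Act) :
    ∀ᶠ n in atTop, ∀ x, (combF T).approxN n (.inl t) x → (combF T).Bisim (.inl t) x := by
  induction t using FST.rec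
    (motive_2 := fun cs => ∀ᶠ n in atTop, ∀ c ∈ cs,
      ∀ x, (combF T).approxN n (.inl c.2) x → (combF T).Bisim (.inl c.2) x)
    (motive_3 := fun c => ∀ᶠ n in atTop,
      ∀ x, (combF T).approxN n (.inl c.2) x → (combF T).Bisim (.inl c.2) x) with
  | node cs d ih =>
    obtain ⟨N, hN⟩ := eventually_atTop.mp ih
    refine eventually_atTop.mpr ⟨N + 1, fun m hm x hx => ?_⟩
    obtain ⟨n, rfl⟩ : ∃ n, m = n + 1 := ⟨m - 1, by omega⟩
    refine LTS.bisim_of_fop_or_bisim (R := fun y z => y = .inl (.node cs d) ∧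
      (combF T).approxN (n + 1) y z) ?_ ⟨rfl, hx⟩
    rintro _ z ⟨rfl, hfwd, hbwd⟩
    refine ⟨fun a y hy => ?_, fun hconv => ?_⟩
    · obtain ⟨t, rfl, ht⟩ := combF_trans_node.mp hy
      obtain ⟨z', hz', htz'⟩ := hfwd a _ hy
      exact ⟨z', hz', Or.inr (hN n (by omega) (a, t) ht z' htz')⟩
    · obtain ⟨hz, hback⟩ := hbwd hconv
      refine ⟨hz, fun a z' hz' => ?_⟩
      obtain ⟨y, hy, hyz'⟩ := hback a z' hz'
      obtain ⟨t, rfl, ht⟩ := combF_trans_node.mp hy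
      exact ⟨_, hy, Or.inr (hN n (by omega) (a, t) ht z' hyz')⟩
  | nil => simp
  | cons c cs hc hcs => exact (hc.and hcs).mono fun _ h => List.forall_mem_cons.mpr h
  | mk a t ht => exact ht

noncomputable def coverTree (d : Bool) (S : Finset (Act × Proc)) (U : Proc → FST Act) : FST Act :=
  .node (S.toList.map fun k => (k.1, U k.2)) d

theorem combF_trans_coverTree {d : Bool} {S : Finset (Act × Proc)} {U : Proc → FST Act} {a : Act}
    {y : FST Act ⊕ Proc} :
    (combF T).trans (.inl (coverTree d S U)) a y ↔ ∃ x, y = .inl (U x) ∧ (a, x) ∈ S := by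
  simp only [coverTree, combF_trans_node, List.mem_map, Finset.mem_toList, Prod.mk.injEq]
  grind

theorem approxN_coverTree {n : ℕ} {r : Proc} {d : Bool} {S : Finset (Act × Proc)}
    {U : Proc → FST Act} (hd : d = true → T.div r) (hSsucc : ∀ k ∈ S, T.trans r k.1 k.2)
    (hS : ∀ a x', T.trans r a x' → ∃ y, (a, y) ∈ S ∧ T.approxN n x' y)
    (hU : ∀ x, (combF T).approxN n (.inr x) (.inl (U x))) :
    (combF T).approxN (n + 1) (.inr r) (.inl (coverTree d S U)) := by
  refine ⟨fun a y hy => ?_, fun hr => ⟨fun hd' => hr (hd hd'), fun a z hz => ?_⟩⟩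
  · obtain ⟨x', rfl, hx'⟩ := combF_trans_inr.mp hy
    obtain ⟨y, hyS, hx'y⟩ := hS a x' hx'
    exact ⟨_, combF_trans_coverTree.mpr ⟨y, rfl, hyS⟩,
      LTS.approxN_trans ((combF_approxN_inr_iff n x' y).mpr hx'y) (hU y)⟩
  · obtain ⟨y, rfl, hyS⟩ := combF_trans_coverTree.mp hz
    exact ⟨.inr y, combF_trans_inr.mpr ⟨y, rfl, hSsucc _ hyS⟩, hU y⟩

theorem bisim_coverTree_of_approxN {n : ℕ} {r : Proc} {d : Bool} {S : Finset (Act × Proc)}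
    {U : Proc → FST Act} (hd : T.div r → d = true) (hSsucc : ∀ k ∈ S, T.trans r k.1 k.2)
    (hS : ∀ a x', T.trans r a x' → ∃ y, (a, y) ∈ S ∧ T.approxN n y x')
    (hU : ∀ x z, (combF T).approxN n (.inr x) z → (combF T).Bisim (.inl (U x)) z)
    {z : FST Act ⊕ Proc} (hz : (combF T).approxN (n + 1) (.inr r) z) :
    (combF T).Bisim (.inl (coverTree d S U)) z := by
  refine LTS.bisim_of_fop_or_bisim (R := fun y z => y = .inl (coverTree d S U) ∧
    (combF T).approxN (n + 1) (.inr r) z) ?_ ⟨rfl, hz⟩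
  rintro _ z ⟨rfl, hfwd, hbwd⟩
  refine ⟨fun a y hy => ?_, fun hconv => ?_⟩
  · obtain ⟨y, rfl, hyS⟩ := combF_trans_coverTree.mp hy
    obtain ⟨z', hz', hyz'⟩ := hfwd a (.inr y) (combF_trans_inr.mpr ⟨y, rfl, hSsucc _ hyS⟩)
    exact ⟨z', hz', Or.inr (hU y z' hyz')⟩
  · obtain ⟨hz, hback⟩ := hbwd fun hr => hconv (hd hr)
    refine ⟨hz, fun a z' hz' => ?_⟩
    obtain ⟨x'', hx'', hx''z'⟩ := hback a z' hz'
    obtain ⟨x', rfl, hx'⟩ := combF_trans_inr.mp hx''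
    obtain ⟨y, hyS, hyx'⟩ := hS a x' hx'
    exact ⟨_, combF_trans_coverTree.mpr ⟨y, rfl, hyS⟩,
      Or.inr (hU y z' (LTS.approxN_trans ((combF_approxN_inr_iff n y x').mpr hyx') hx''z'))⟩

theorem exists_characteristic_tree (hsort : ∀ p, (T.sortP p).Finite) (n : ℕ) (r : Proc) :
    ∃ u : FST Act, (combF T).approxN n (.inr r) (.inl u) ∧
      ∀ x, (combF T).approxN n (.inr r) x → (combF T).Bisim (.inl u) x := by
  classical
  induction n generalizing r with
  | zero =>
    refine ⟨.node [] true, trivial, fun x _ => LTS.bisim_of_fop_or_bisim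
      (R := fun y _ => y = .inl (.node [] true)) ?_ rfl⟩
    rintro _ z rfl
    refine ⟨fun a y hy => ?_, fun hconv => absurd rfl hconv⟩
    obtain ⟨_, _, h⟩ := combF_trans_node.mp hy
    simp at h
  | succ n ih =>
    choose U hrU hU using ih
    obtain ⟨S, hSsucc, hS⟩ := LTS.exists_finite_successor_cover (hsort r) n
    refine ⟨coverTree (decide (T.div r)) S U, approxN_coverTree (by simp) hSsucc ?_ hrU,
      fun x => bisim_coverTree_of_approxN (by simp) hSsucc ?_ hU⟩
    · exact fun a x' hx' => (hS a x' hx').imp fun _ h => ⟨h.1, h.2.1⟩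
    · exact fun a x' hx' => (hS a x' hx').imp fun _ h => ⟨h.1, h.2.2⟩

end combF

theorem finpre_eq_approx_omega_general {Proc Act : Type u} (T : LTS Proc Act)
    (hsort : ∀ p, (T.sortP p).Finite) :
    ∀ p q, FinPre T p q ↔ T.approxOmega p q := by
  intro p q
  constructor
  · intro hpq n
    obtain ⟨u, hpu, hu⟩ := exists_characteristic_tree hsort n p
    have huq : (combF T).Bisim (.inl u) (.inr q) := hpq u (hu _ (LTS.approxN_refl _ n _))
    exact (combF_approxN_inr_iff n p q).mp (LTS.approxN_trans hpu (LTS.approxN_of_bisim huq n))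
  · intro hpq t htp
    obtain ⟨n, hn⟩ := (eventually_bisim_of_approxN_tree T t).exists
    exact hn _ (LTS.approxN_trans (LTS.approxN_of_bisim htp n)
      ((combF_approxN_inr_iff n p q).mpr (hpq n)))

/-- In any sort-finite transition system satisfying bounded non-determinacy,
the finitary preorder coincides with the ω-approximant of bisimulation:
`≲^F = ≲_ω`. -/
theorem finpre_eq_approx_omega {Proc Act : Type u} (T : LTS Proc Act)
    (hsort : ∀ p, (T.sortP p).Finite) (hBN : BN T) :
    ∀ p q, FinPre T p q ↔ T.approxOmega p q :=
  finpre_eq_approx_omega_general T hsort
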